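/- For all l ∈ [0, π_2/2], the derivative of arctan(sleaf_2(l)) with respect to l equals cleaf_2(l). -/

import Mathlib

/-!
Let `arcsleaf r = ∫₀ʳ dt / √(1 - t⁴)`, so that `sleaf` inverts `arcsleaf`, and let
`c(s) = √(1 - s⁴) / (1 + s²)`. Differentiating gives the addition formula
`arcsleaf (c s) + arcsleaf s = arcsleaf 1`, hence `cleaf = c ∘ sleaf`. Since
`c(t) / √(1 - t⁴) = 1 / (1 + t²)` and `c` is decreasing on `[0, 1]`, for `m₁ < m₂` the increment
`arctan (sleaf m₂) - arctan (sleaf m₁) = ∫ c(t) dt / √(1 - t⁴)` over `[sleaf m₁, sleaf m₂]` lies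
between `c (sleaf m₂) (m₂ - m₁)` and `c (sleaf m₁) (m₂ - m₁)`. As `sleaf` is 1-Lipschitz, the
difference quotients are squeezed to `c (sleaf l) = cleaf l`. The squeeze also works at
`l = π₂ / 2`, where `arcsleaf` has infinite slope and the inverse function theorem does not apply.
-/

open Real Set MeasureTheory Filter Topology

theorem hasDerivWithinAt_of_slope_mem_uIcc {g h : ℝ → ℝ} {s : Set ℝ} {x : ℝ}
    (hh : ContinuousWithinAt h s x)
    (hslope : ∀ y ∈ s, y ≠ x → slope g x y ∈ uIcc (h x) (h y)) :
    HasDerivWithinAt g (h x) s x := by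
  rw [hasDerivWithinAt_iff_tendsto_slope, tendsto_iff_dist_tendsto_zero]
  have hdist : Tendsto (fun y => dist (h y) (h x)) (𝓝[s \ {x}] x) (𝓝 0) :=
    (tendsto_iff_dist_tendsto_zero.1 hh).mono_left (nhdsWithin_mono _ sdiff_subset)
  refine squeeze_zero' (Eventually.of_forall fun _ => dist_nonneg) ?_ hdist
  filter_upwards [self_mem_nhdsWithin] with y hy
  exact abs_sub_left_of_mem_uIcc (hslope y hy.1 hy.2)

theorem one_sub_le_one_sub_pow_four {t : ℝ} (h0 : 0 ≤ t) (h1 : t ≤ 1) : 1 - t ≤ 1 - t ^ 4 := by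
  nlinarith [pow_le_one₀ h0 h1 (n := 3)]

theorem one_le_one_div_sqrt_one_sub_pow_four {t : ℝ} (h0 : 0 ≤ t) (h1 : t < 1) :
    1 ≤ 1 / √(1 - t ^ 4) := by
  have hpos : 0 < 1 - t ^ 4 := by nlinarith [pow_lt_one₀ h0 h1 (n := 4) (by norm_num)]
  rw [le_div_iff₀ (sqrt_pos.2 hpos), one_mul, sqrt_le_one]
  nlinarith [pow_nonneg h0 4]

theorem intervalIntegrable_one_div_sqrt_one_sub_pow_four :
    IntervalIntegrable (fun t : ℝ => 1 / √(1 - t ^ 4)) volume 0 1 := by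
  have hdom : IntervalIntegrable (fun t : ℝ => (1 - t) ^ (-(1 / 2) : ℝ)) volume 0 1 := by
    simpa using ((intervalIntegral.intervalIntegrable_rpow' (a := 0) (b := 1)
      (r := -(1 / 2)) (by norm_num)).comp_sub_left 1).symm
  refine hdom.mono_fun' (Measurable.aestronglyMeasurable (by fun_prop)) ?_
  rw [EventuallyLE, ae_restrict_iff' measurableSet_uIoc, uIoc_of_le zero_le_one]
  refine Eventually.of_forall fun t ⟨ht0, ht1⟩ => ?_
  rcases ht1.lt_or_eq with ht1 | rfl
  · have hpos : 0 < 1 - t := sub_pos.2 ht1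
    rw [norm_of_nonneg (by positivity), rpow_neg hpos.le, ← sqrt_eq_rpow, one_div,
      inv_le_inv₀ (sqrt_pos.2 (hpos.trans_le (one_sub_le_one_sub_pow_four ht0.le ht1.le)))
        (sqrt_pos.2 hpos)]
    exact sqrt_le_sqrt (one_sub_le_one_sub_pow_four ht0.le ht1.le)
  · norm_num

theorem continuousOn_one_div_sqrt_one_sub_pow_four :
    ContinuousOn (fun t : ℝ => 1 / √(1 - t ^ 4)) (Ioo (-1) 1) := by
  intro t ht
  have : 0 < 1 - t ^ 4 := by
    have : t ^ 2 < 1 := by nlinarith [ht.1, ht.2]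
    nlinarith [sq_nonneg t]
  exact (continuousAt_const.div (by fun_prop : Continuous fun t : ℝ => √(1 - t ^ 4)).continuousAt
    (sqrt_pos.2 this).ne').continuousWithinAt

theorem intervalIntegrable_one_div_sqrt_one_sub_pow_four_of_mem {a b : ℝ}
    (ha : a ∈ Icc (0 : ℝ) 1) (hb : b ∈ Icc (0 : ℝ) 1) :
    IntervalIntegrable (fun t : ℝ => 1 / √(1 - t ^ 4)) volume a b :=
  intervalIntegrable_one_div_sqrt_one_sub_pow_four.mono_set <| by
    rw [uIcc_of_le zero_le_one]; exact uIcc_subset_Icc ha hb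

noncomputable def arcsleaf (r : ℝ) : ℝ := ∫ t in (0 : ℝ)..r, 1 / √(1 - t ^ 4)

theorem arcsleaf_zero : arcsleaf 0 = 0 := intervalIntegral.integral_same

theorem arcsleaf_sub_arcsleaf {a b : ℝ} (ha : a ∈ Icc (0 : ℝ) 1) (hb : b ∈ Icc (0 : ℝ) 1) :
    arcsleaf b - arcsleaf a = ∫ t in a..b, 1 / √(1 - t ^ 4) :=
  intervalIntegral.integral_interval_sub_left
    (intervalIntegrable_one_div_sqrt_one_sub_pow_four_of_mem (left_mem_Icc.2 zero_le_one) hb)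
    (intervalIntegrable_one_div_sqrt_one_sub_pow_four_of_mem (left_mem_Icc.2 zero_le_one) ha)

theorem sub_le_arcsleaf_sub {a b : ℝ} (ha : 0 ≤ a) (hab : a ≤ b) (hb : b ≤ 1) :
    b - a ≤ arcsleaf b - arcsleaf a := by
  have ha' : a ∈ Icc (0 : ℝ) 1 := ⟨ha, hab.trans hb⟩
  have hb' : b ∈ Icc (0 : ℝ) 1 := ⟨ha.trans hab, hb⟩
  rw [arcsleaf_sub_arcsleaf ha' hb']
  calc b - a = ∫ _ in a..b, (1 : ℝ) := by simp
    _ ≤ ∫ t in a..b, 1 / √(1 - t ^ 4) := by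
      refine intervalIntegral.integral_mono_ae_restrict hab intervalIntegrable_const
        (intervalIntegrable_one_div_sqrt_one_sub_pow_four_of_mem ha' hb') ?_
      rw [EventuallyLE, ae_restrict_iff' measurableSet_Icc]
      filter_upwards [Measure.ae_ne volume 1] with t ht1 ht
      exact one_le_one_div_sqrt_one_sub_pow_four (ha.trans ht.1)
        ((ht.2.trans hb).lt_of_ne ht1)

theorem strictMonoOn_arcsleaf : StrictMonoOn arcsleaf (Icc 0 1) :=
  fun a ha b hb hab => by linarith [sub_le_arcsleaf_sub ha.1 hab.le hb.2]

theorem abs_sub_le_abs_arcsleaf_sub {a b : ℝ} (ha : a ∈ Icc (0 : ℝ) 1) (hb : b ∈ Icc (0 : ℝ) 1) :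
    |b - a| ≤ |arcsleaf b - arcsleaf a| := by
  rcases le_total a b with hab | hba
  · rw [abs_of_nonneg (sub_nonneg.2 hab),
      abs_of_nonneg (sub_nonneg.2 (strictMonoOn_arcsleaf.monotoneOn ha hb hab))]
    exact sub_le_arcsleaf_sub ha.1 hab hb.2
  · rw [abs_sub_comm, abs_sub_comm (arcsleaf b), abs_of_nonneg (sub_nonneg.2 hba),
      abs_of_nonneg (sub_nonneg.2 (strictMonoOn_arcsleaf.monotoneOn hb ha hba))]
    exact sub_le_arcsleaf_sub hb.1 hba ha.2

theorem continuousOn_arcsleaf : ContinuousOn arcsleaf (Icc 0 1) := by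
  have h := intervalIntegral.continuousOn_primitive_interval'
    intervalIntegrable_one_div_sqrt_one_sub_pow_four left_mem_uIcc
  rwa [uIcc_of_le zero_le_one] at h

theorem hasDerivAt_arcsleaf {x : ℝ} (hx : x ∈ Ioo (-1 : ℝ) 1) :
    HasDerivAt arcsleaf (1 / √(1 - x ^ 4)) x := by
  have hsub : uIcc 0 x ⊆ Ioo (-1) 1 := ordConnected_Ioo.uIcc_subset (by norm_num) hx
  exact intervalIntegral.integral_hasDerivAt_right
    ((continuousOn_one_div_sqrt_one_sub_pow_four.mono hsub).intervalIntegrable)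
    (continuousOn_one_div_sqrt_one_sub_pow_four.stronglyMeasurableAtFilter isOpen_Ioo x hx)
    (continuousOn_one_div_sqrt_one_sub_pow_four.continuousAt (isOpen_Ioo.mem_nhds hx))

/-- The solution `c ≥ 0` of `s² + c² + s²c² = 1`, i.e. `√((1 - s²) / (1 + s²))`. -/
noncomputable def cleafOfSleaf (s : ℝ) : ℝ := √(1 - s ^ 4) / (1 + s ^ 2)

theorem continuous_cleafOfSleaf : Continuous cleafOfSleaf :=
  (by fun_prop : Continuous fun s : ℝ => √(1 - s ^ 4)).div (by fun_prop)
    fun s => (by positivity : (0 : ℝ) < 1 + s ^ 2).ne'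

theorem cleafOfSleaf_zero : cleafOfSleaf 0 = 1 := by simp [cleafOfSleaf]

theorem cleafOfSleaf_mem_Icc (s : ℝ) : cleafOfSleaf s ∈ Icc (0 : ℝ) 1 := by
  refine ⟨by unfold cleafOfSleaf; positivity, ?_⟩
  rw [cleafOfSleaf, div_le_one (by positivity)]
  exact (sqrt_le_one.2 (by nlinarith [pow_nonneg (sq_nonneg s) 2])).trans
    (le_add_of_nonneg_right (sq_nonneg s))

theorem cleafOfSleaf_lt_one {s : ℝ} (hs : s ≠ 0) : cleafOfSleaf s < 1 := by
  rw [cleafOfSleaf, div_lt_one (by positivity)]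
  exact (sqrt_le_one.2 (by nlinarith [pow_nonneg (sq_nonneg s) 2])).trans_lt
    (lt_add_of_pos_right 1 (by positivity))

theorem antitoneOn_cleafOfSleaf : AntitoneOn cleafOfSleaf (Ici 0) := by
  intro a ha b _ hab
  exact div_le_div₀ (sqrt_nonneg _)
    (sqrt_le_sqrt (by linarith [pow_le_pow_left₀ (mem_Ici.1 ha) hab 4]))
    (by positivity) (by nlinarith [mem_Ici.1 ha])

theorem one_div_sqrt_mul_cleafOfSleaf {t : ℝ} (ht : t ^ 4 < 1) :
    1 / √(1 - t ^ 4) * cleafOfSleaf t = 1 / (1 + t ^ 2) := by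
  have : √(1 - t ^ 4) ≠ 0 := (sqrt_pos.2 (sub_pos.2 ht)).ne'
  rw [cleafOfSleaf]
  field_simp

theorem one_sub_cleafOfSleaf_pow_four {s : ℝ} (hs : s ^ 4 ≤ 1) :
    1 - cleafOfSleaf s ^ 4 = (2 * s / (1 + s ^ 2)) ^ 2 := by
  have hR : √(1 - s ^ 4) ^ 4 = (1 - s ^ 4) ^ 2 := by
    rw [show (4 : ℕ) = 2 * 2 from rfl, pow_mul, sq_sqrt (sub_nonneg.2 hs)]
  rw [cleafOfSleaf, div_pow, hR]
  field_simp
  ring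

theorem hasDerivAt_cleafOfSleaf {s : ℝ} (hs : s ^ 4 < 1) :
    HasDerivAt cleafOfSleaf (-2 * s / (√(1 - s ^ 4) * (1 + s ^ 2))) s := by
  have hR : 0 < √(1 - s ^ 4) := sqrt_pos.2 (sub_pos.2 hs)
  have hR2 : √(1 - s ^ 4) ^ 2 = 1 - s ^ 4 := sq_sqrt (sub_pos.2 hs).le
  have hnum : HasDerivAt (fun s : ℝ => √(1 - s ^ 4)) (-(4 * s ^ 3) / (2 * √(1 - s ^ 4))) s := by
    simpa using ((hasDerivAt_pow 4 s).const_sub 1).sqrt (sub_pos.2 hs).ne'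
  have hden : HasDerivAt (fun s : ℝ => 1 + s ^ 2) (2 * s) s := by
    simpa using (hasDerivAt_pow 2 s).const_add 1
  have h : HasDerivAt cleafOfSleaf _ s := hnum.div hden (by positivity : (0 : ℝ) < 1 + s ^ 2).ne'
  refine h.congr_deriv ?_
  field_simp
  linear_combination (-4 * s) * hR2

theorem hasDerivAt_arcsleaf_cleafOfSleaf {s : ℝ} (hs : s ∈ Ioo (0 : ℝ) 1) :
    HasDerivAt (fun s => arcsleaf (cleafOfSleaf s)) (-(1 / √(1 - s ^ 4))) s := by
  have hs4 : s ^ 4 < 1 := pow_lt_one₀ hs.1.le hs.2 four_ne_zero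
  have hc : cleafOfSleaf s ∈ Ioo (-1) 1 :=
    ⟨by linarith [(cleafOfSleaf_mem_Icc s).1], cleafOfSleaf_lt_one hs.1.ne'⟩
  refine ((hasDerivAt_arcsleaf hc).comp s (hasDerivAt_cleafOfSleaf hs4)).congr_deriv ?_
  have : √(1 - s ^ 4) ≠ 0 := (sqrt_pos.2 (sub_pos.2 hs4)).ne'
  have : s ≠ 0 := hs.1.ne'
  rw [one_sub_cleafOfSleaf_pow_four hs4.le, sqrt_sq (by have := hs.1; positivity)]
  field_simp

theorem arcsleaf_cleafOfSleaf_add_arcsleaf {s : ℝ} (hs : s ∈ Icc (0 : ℝ) 1) :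
    arcsleaf (cleafOfSleaf s) + arcsleaf s = arcsleaf 1 := by
  rcases hs.1.eq_or_lt with rfl | hs0
  · rw [cleafOfSleaf_zero, arcsleaf_zero, add_zero]
  have hcont : ContinuousOn (fun s => arcsleaf (cleafOfSleaf s) + arcsleaf s) (Icc 0 s) :=
    (continuousOn_arcsleaf.comp continuous_cleafOfSleaf.continuousOn
      fun x _ => cleafOfSleaf_mem_Icc x).add
      (continuousOn_arcsleaf.mono (Icc_subset_Icc_right hs.2))
  obtain ⟨c, -, hslope⟩ := exists_hasDerivAt_eq_slope _ (fun _ => 0) hs0 hcont fun x hx => by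
    have hx1 : x ∈ Ioo (0 : ℝ) 1 := ⟨hx.1, hx.2.trans_le hs.2⟩
    exact ((hasDerivAt_arcsleaf_cleafOfSleaf hx1).add
      (hasDerivAt_arcsleaf ⟨by linarith [hx1.1], hx1.2⟩)).congr_deriv (neg_add_cancel _)
  rw [eq_comm, div_eq_zero_iff, sub_eq_zero, sub_eq_zero, cleafOfSleaf_zero, arcsleaf_zero,
    add_zero] at hslope
  exact hslope.resolve_right hs0.ne'

theorem arctan_sub_arctan_mem_Icc {a b : ℝ} (ha : 0 ≤ a) (hab : a ≤ b) (hb : b ≤ 1) :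
    arctan b - arctan a ∈ Icc (cleafOfSleaf b * (arcsleaf b - arcsleaf a))
      (cleafOfSleaf a * (arcsleaf b - arcsleaf a)) := by
  have hf := intervalIntegrable_one_div_sqrt_one_sub_pow_four_of_mem
    ⟨ha, hab.trans hb⟩ ⟨ha.trans hab, hb⟩
  have hg : IntervalIntegrable (fun t : ℝ => 1 / (1 + t ^ 2)) volume a b :=
    (continuous_const.div (by fun_prop) fun t => (by positivity : (0 : ℝ) < 1 + t ^ 2).ne')
      |>.intervalIntegrable a b
  have hbetween : ∀ᵐ t ∂volume.restrict (Icc a b),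
      1 / √(1 - t ^ 4) * cleafOfSleaf b ≤ 1 / (1 + t ^ 2) ∧
      1 / (1 + t ^ 2) ≤ 1 / √(1 - t ^ 4) * cleafOfSleaf a := by
    rw [ae_restrict_iff' measurableSet_Icc]
    filter_upwards [Measure.ae_ne volume 1] with t ht1 ht
    have h0 : 0 ≤ t := ha.trans ht.1
    rw [← one_div_sqrt_mul_cleafOfSleaf
      (pow_lt_one₀ h0 ((ht.2.trans hb).lt_of_ne ht1) four_ne_zero)]
    exact ⟨mul_le_mul_of_nonneg_left (antitoneOn_cleafOfSleaf h0 (ha.trans hab) ht.2)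
        (by positivity),
      mul_le_mul_of_nonneg_left (antitoneOn_cleafOfSleaf ha h0 ht.1) (by positivity)⟩
  rw [← integral_one_div_one_add_sq, arcsleaf_sub_arcsleaf ⟨ha, hab.trans hb⟩ ⟨ha.trans hab, hb⟩,
    mul_comm, mul_comm (cleafOfSleaf a), ← intervalIntegral.integral_mul_const,
    ← intervalIntegral.integral_mul_const]
  exact ⟨intervalIntegral.integral_mono_ae_restrict hab (hf.mul_const _) hg
      (hbetween.mono fun _ => And.left),
    intervalIntegral.integral_mono_ae_restrict hab hg (hf.mul_const _)
      (hbetween.mono fun _ => And.right)⟩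

section InverseOfArcsleaf

variable {σ : ℝ → ℝ} {S : Set ℝ}

theorem lipschitzOnWith_one_of_leftInvOn_arcsleaf (hmaps : MapsTo σ S (Icc 0 1))
    (hinv : LeftInvOn arcsleaf σ S) : LipschitzOnWith 1 σ S :=
  LipschitzOnWith.of_dist_le_mul fun x hx y hy => by
    simpa [dist_eq, hinv hx, hinv hy] using abs_sub_le_abs_arcsleaf_sub (hmaps hy) (hmaps hx)

theorem slope_arctan_comp_mem_uIcc (hmaps : MapsTo σ S (Icc 0 1))
    (hinv : LeftInvOn arcsleaf σ S) {x y : ℝ} (hx : x ∈ S) (hy : y ∈ S) (hyx : y ≠ x) :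
    slope (fun m => arctan (σ m)) x y ∈ uIcc (cleafOfSleaf (σ x)) (cleafOfSleaf (σ y)) := by
  wlog hlt : x < y generalizing x y
  · rw [slope_comm, uIcc_comm]
    exact this hy hx hyx.symm (hyx.lt_or_gt.resolve_right hlt)
  have hσ : σ x ≤ σ y := (strictMonoOn_arcsleaf.le_iff_le (hmaps hx) (hmaps hy)).1 <| by
    rw [hinv hx, hinv hy]; exact hlt.le
  have h := arctan_sub_arctan_mem_Icc (hmaps hx).1 hσ (hmaps hy).2
  rw [hinv hx, hinv hy] at h
  rw [slope_def_field, uIcc_comm]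
  exact Icc_subset_uIcc ⟨(le_div_iff₀ (sub_pos.2 hlt)).2 h.1, (div_le_iff₀ (sub_pos.2 hlt)).2 h.2⟩

theorem hasDerivWithinAt_arctan_comp (hmaps : MapsTo σ S (Icc 0 1))
    (hinv : LeftInvOn arcsleaf σ S) {x : ℝ} (hx : x ∈ S) :
    HasDerivWithinAt (fun m => arctan (σ m)) (cleafOfSleaf (σ x)) S x :=
  hasDerivWithinAt_of_slope_mem_uIcc
    (continuous_cleafOfSleaf.continuousAt.comp_continuousWithinAt
      ((lipschitzOnWith_one_of_leftInvOn_arcsleaf hmaps hinv).continuousOn x hx))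
    fun _ hy hyx => slope_arctan_comp_mem_uIcc hmaps hinv hx hy hyx

end InverseOfArcsleaf

theorem deriv_arctan_sleaf (π₂ : ℝ) (hπ : π₂ = 2 * ∫ t in (0:ℝ)..1, 1 / Real.sqrt (1 - t ^ 4))
    (sleaf : ℝ → ℝ)
    (hs : ∀ l ∈ Set.Icc 0 (π₂ / 2), sleaf l ∈ Set.Icc (0:ℝ) 1 ∧
      (∫ t in (0:ℝ)..(sleaf l), 1 / Real.sqrt (1 - t ^ 4)) = l)
    (cleaf : ℝ → ℝ)
    (hc : ∀ l ∈ Set.Icc 0 (π₂ / 2), cleaf l ∈ Set.Icc (0:ℝ) 1 ∧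
      (∫ t in (cleaf l)..1, 1 / Real.sqrt (1 - t ^ 4)) = l) :
    ∀ l ∈ Set.Icc 0 (π₂ / 2),
      derivWithin (fun x => Real.arctan (sleaf x)) (Set.Icc 0 (π₂ / 2)) l = cleaf l := by
  intro l hl
  have hmaps : MapsTo sleaf (Icc 0 (π₂ / 2)) (Icc 0 1) := fun m hm => (hs m hm).1
  have hinv : LeftInvOn arcsleaf sleaf (Icc 0 (π₂ / 2)) := fun m hm => (hs m hm).2
  have hπ₂ : π₂ / 2 = arcsleaf 1 := by rw [hπ, arcsleaf]; ring
  have hpos : 0 < π₂ / 2 := by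
    linarith [sub_le_arcsleaf_sub le_rfl zero_le_one le_rfl, arcsleaf_zero]
  have hcleaf : cleaf l = cleafOfSleaf (sleaf l) := by
    obtain ⟨hmem, hint⟩ := hc l hl
    refine strictMonoOn_arcsleaf.injOn hmem (cleafOfSleaf_mem_Icc _) ?_
    linarith [arcsleaf_sub_arcsleaf hmem (right_mem_Icc.2 zero_le_one),
      arcsleaf_cleafOfSleaf_add_arcsleaf (hmaps hl), hinv hl]
  rw [hcleaf]
  exact (hasDerivWithinAt_arctan_comp hmaps hinv hl).derivWithin (uniqueDiffOn_Icc hpos l hl)
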